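/- arXiv:2603.27078 — 2 statements merged into one kernel-verified Lean document; each statement's English description precedes it below -/
import Mathlib

section
/- Suppose θLΔ ≤ 1/2 and |f(t,0)| ≤ K for some K ≥ 0 and some fixed t ≥ 0. Then the inverse map satisfies the linear growth bound |F_t^{-1}(x)| ≤ (1 + 2θLΔ)·|x| + 2KθΔ for every x ∈ ℝ^d. -/
theorem stmt_5 (d : ℕ) (hd : 1 ≤ d)
    (f : ℝ → EuclideanSpace ℝ (Fin d) → EuclideanSpace ℝ (Fin d))
    (L : ℝ) (hL : 0 < L)
    (hf : ∀ t : ℝ, 0 ≤ t → ∀ x y : EuclideanSpace ℝ (Fin d),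
      ‖f t x - f t y‖ ≤ L * ‖x - y‖)
    (θ Δ : ℝ) (hθ : θ ∈ Set.Icc (0:ℝ) 1) (hΔ : Δ ∈ Set.Ioo (0:ℝ) 1)
    (F : ℝ → EuclideanSpace ℝ (Fin d) → EuclideanSpace ℝ (Fin d))
    (hF : ∀ t x, F t x = x - (θ * Δ) • f t x)
    (hsmall : θ * L * Δ ≤ 1 / 2)
    (Finv : ℝ → EuclideanSpace ℝ (Fin d) → EuclideanSpace ℝ (Fin d))
    (hleft : ∀ t : ℝ, 0 ≤ t → ∀ x, Finv t (F t x) = x)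
    (hright : ∀ t : ℝ, 0 ≤ t → ∀ x, F t (Finv t x) = x)
    (t : ℝ) (ht : 0 ≤ t) (K : ℝ) (hK : 0 ≤ K) (hf0 : ‖f t 0‖ ≤ K) :
    ∀ x : EuclideanSpace ℝ (Fin d),
      ‖Finv t x‖ ≤ (1 + 2 * θ * L * Δ) * ‖x‖ + 2 * K * θ * Δ := by
  intro x
  set y := Finv t x with hy
  have hFx : y - (θ * Δ) • f t y = x := by
    rw [← hF]; exact hright t ht x
  have hθΔ : 0 ≤ θ * Δ := mul_nonneg hθ.1 hΔ.1.le
  have hlip : ‖f t y - f t 0‖ ≤ L * ‖y‖ := by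
    simpa using hf t ht y 0
  have hfy : ‖f t y‖ ≤ L * ‖y‖ + K := by
    calc ‖f t y‖ ≤ ‖f t y - f t 0‖ + ‖f t 0‖ := by simpa using norm_add_le (f t y - f t 0) (f t 0)
    _ ≤ L * ‖y‖ + K := add_le_add hlip hf0
  have hyx : ‖y‖ ≤ ‖x‖ + (θ * Δ) * ‖f t y‖ := by
    calc ‖y‖ = ‖x + (θ * Δ) • f t y‖ := by rw [← hFx]; rw [sub_add_cancel]
    _ ≤ ‖x‖ + ‖(θ * Δ) • f t y‖ := norm_add_le _ _
    _ = ‖x‖ + (θ * Δ) * ‖f t y‖ := by rw [norm_smul, Real.norm_of_nonneg hθΔ]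
  have hkey : ‖y‖ ≤ ‖x‖ + (θ * Δ) * (L * ‖y‖ + K) :=
    hyx.trans (by nlinarith)
  have hx0 : (0:ℝ) ≤ ‖x‖ := norm_nonneg _
  have hy0 : (0:ℝ) ≤ ‖y‖ := norm_nonneg _
  nlinarith [mul_nonneg (mul_nonneg hθ.1 hL.le) hΔ.1.le,
    mul_nonneg hθΔ hK, mul_nonneg hx0 (mul_nonneg (mul_nonneg hθ.1 hL.le) hΔ.1.le)]
end

section
/- For every real p ≥ 2 and all x, y ∈ ℝ^d, one has |x + y|^p ≤ |x|^p + p·|x|^{p-2}·⟨x, y⟩ + C(p)·(|x|^{p-2}·|y|² + |y|^p), where C(p) := p(p−1)·2^{p-3}. -/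
/-!
Put `φ(t) = ‖x + t y‖ ^ p`, so that `φ'(t) = p ‖x + t y‖ ^ (p - 2) ⟪x + t y, y⟫`. The map
`u ↦ ‖u‖ ^ (p - 2) • u` is Lipschitz on the ball of radius `M` with constant `(p - 1) M ^ (p - 2)`,
so on `[0, 1]` we get `φ'(t) ≤ φ'(0) + K t` with `K = p (p - 1) (‖x‖ + ‖y‖) ^ (p - 2) ‖y‖²`,
whence `φ(1) ≤ φ(0) + φ'(0) + K / 2`. Finally `(a + b) ^ (p - 2) ≤ 2 ^ (p - 2) (a ^ (p - 2) + b ^ (p - 2))`.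
-/

open scoped RealInnerProductSpace
open Real Set

lemma rpow_sub_rpow_mul_le {q a b : ℝ} (hq : 0 ≤ q) (hb : 0 ≤ b) (hba : b ≤ a) :
    (a ^ q - b ^ q) * b ≤ q * a ^ q * (a - b) := by
  rcases (hb.trans hba).eq_or_lt with ha | ha
  · obtain rfl : b = 0 := le_antisymm (hba.trans ha.ge) hb
    simp [← ha]
  · set t := b / a
    have ht : 0 ≤ t := div_nonneg hb ha.le
    have hb' : b = a * t := (mul_div_cancel₀ b ha.ne').symm
    have hbern : 1 + (q + 1) * (t - 1) ≤ t ^ q * t := by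
      have := one_add_mul_self_le_rpow_one_add (s := t - 1) (p := q + 1) (by linarith)
        (by linarith)
      rwa [add_sub_cancel, rpow_add' ht (by linarith), rpow_one] at this
    calc (a ^ q - b ^ q) * b = a ^ q * a * ((1 - t ^ q) * t) := by
          rw [hb', mul_rpow ha.le ht]; ring
      _ ≤ a ^ q * a * (q * (1 - t)) := mul_le_mul_of_nonneg_left (by nlinarith) (by positivity)
      _ = q * a ^ q * (a - b) := by rw [hb']; ring

lemma add_rpow_le_two_rpow_mul_add_rpow {q a b : ℝ} (hq : 0 ≤ q) (ha : 0 ≤ a) (hb : 0 ≤ b) :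
    (a + b) ^ q ≤ 2 ^ q * (a ^ q + b ^ q) := by
  wlog hab : a ≤ b generalizing a b
  · rw [add_comm a, add_comm (a ^ q)]
    exact this hb ha (le_of_not_ge hab)
  calc (a + b) ^ q ≤ (2 * b) ^ q := by gcongr; linarith
    _ = 2 ^ q * b ^ q := mul_rpow zero_le_two hb
    _ ≤ 2 ^ q * (a ^ q + b ^ q) := by gcongr; linarith [rpow_nonneg ha q]

lemma le_add_add_half_of_hasDerivAt_le {f f' : ℝ → ℝ} {c K : ℝ}
    (hf : ∀ t ∈ Icc (0 : ℝ) 1, HasDerivAt f (f' t) t)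
    (hf' : ∀ t ∈ Icc (0 : ℝ) 1, f' t ≤ c + K * t) :
    f 1 ≤ f 0 + c + K / 2 := by
  let g : ℝ → ℝ := fun t => f t - (c * t + K / 2 * t ^ 2)
  have hg : ∀ t ∈ Icc (0 : ℝ) 1, HasDerivAt g (f' t - (c + K * t)) t := by
    intro t ht
    refine ((hf t ht).sub (((hasDerivAt_id t).const_mul c).add
      ((hasDerivAt_pow 2 t).const_mul (K / 2)))).congr_deriv ?_
    simp only [mul_one, Nat.cast_ofNat]
    ring
  have hanti : AntitoneOn g (Icc 0 1) := by
    refine antitoneOn_of_hasDerivWithinAt_nonpos (convex_Icc 0 1)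
      (fun t ht => (hg t ht).continuousAt.continuousWithinAt) (fun t ht => ?_)
      (fun t ht => sub_nonpos.2 (hf' t (interior_subset ht)))
    exact (hg t (interior_subset ht)).hasDerivWithinAt
  have := hanti (left_mem_Icc.2 zero_le_one) (right_mem_Icc.2 zero_le_one) zero_le_one
  simp only [g] at this
  linarith

lemma add_rpow_sub_two_mul_sq_le {p a b : ℝ} (hp : 2 ≤ p) (ha : 0 ≤ a) (hb : 0 ≤ b) :
    (a + b) ^ (p - 2) * b ^ 2 / 2 ≤ 2 ^ (p - 3) * (a ^ (p - 2) * b ^ 2 + b ^ p) := by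
  have htwo : (2 : ℝ) ^ (p - 2) = 2 * 2 ^ (p - 3) := by
    rw [show p - 2 = p - 3 + 1 by ring, rpow_add_one two_ne_zero]; ring
  have hb' : b ^ (p - 2) * b ^ 2 = b ^ p := by
    rw [← rpow_natCast, ← rpow_add' hb (by norm_num; linarith)]; norm_num
  calc (a + b) ^ (p - 2) * b ^ 2 / 2 ≤ 2 ^ (p - 2) * (a ^ (p - 2) + b ^ (p - 2)) * b ^ 2 / 2 := by
        gcongr
        exact add_rpow_le_two_rpow_mul_add_rpow (by linarith) ha hb
    _ = 2 ^ (p - 3) * (a ^ (p - 2) * b ^ 2 + b ^ p) := by rw [htwo, ← hb']; ring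

section InnerProductSpace

variable {E : Type*} [NormedAddCommGroup E] [InnerProductSpace ℝ E]

lemma norm_rpow_smul_sub_rpow_smul_le {q : ℝ} (hq : 0 ≤ q) {u v : E} (h : ‖v‖ ≤ ‖u‖) :
    ‖(‖u‖ ^ q) • u - (‖v‖ ^ q) • v‖ ≤ (q + 1) * ‖u‖ ^ q * ‖u - v‖ := by
  have hsplit : (‖u‖ ^ q) • u - (‖v‖ ^ q) • v = (‖u‖ ^ q) • (u - v) + (‖u‖ ^ q - ‖v‖ ^ q) • v := by
    rw [smul_sub, sub_smul]; abel
  have hmono : ‖v‖ ^ q ≤ ‖u‖ ^ q := rpow_le_rpow (norm_nonneg v) h hq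
  calc ‖(‖u‖ ^ q) • u - (‖v‖ ^ q) • v‖
      ≤ ‖u‖ ^ q * ‖u - v‖ + (‖u‖ ^ q - ‖v‖ ^ q) * ‖v‖ := by
        rw [hsplit]
        refine (norm_add_le _ _).trans_eq ?_
        rw [norm_smul, norm_smul, norm_of_nonneg (by positivity),
          norm_of_nonneg (sub_nonneg.2 hmono)]
    _ ≤ ‖u‖ ^ q * ‖u - v‖ + q * ‖u‖ ^ q * ‖u - v‖ := by
        refine add_le_add_right ((rpow_sub_rpow_mul_le hq (norm_nonneg v) h).trans ?_) _
        gcongr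
        exact norm_sub_norm_le u v
    _ = (q + 1) * ‖u‖ ^ q * ‖u - v‖ := by ring

lemma norm_rpow_smul_sub_rpow_smul_le_of_norm_le {q M : ℝ} (hq : 0 ≤ q) {u v : E}
    (hu : ‖u‖ ≤ M) (hv : ‖v‖ ≤ M) :
    ‖(‖u‖ ^ q) • u - (‖v‖ ^ q) • v‖ ≤ (q + 1) * M ^ q * ‖u - v‖ := by
  wlog h : ‖v‖ ≤ ‖u‖ generalizing u v
  · rw [norm_sub_rev, norm_sub_rev u]
    exact this hv hu (le_of_not_ge h)
  exact (norm_rpow_smul_sub_rpow_smul_le hq h).trans (by gcongr)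

lemma hasDerivAt_norm_add_smul_rpow {p : ℝ} (hp : 1 < p) (x y : E) (t : ℝ) :
    HasDerivAt (fun s : ℝ => ‖x + s • y‖ ^ p)
      (p * ‖x + t • y‖ ^ (p - 2) * ⟪x + t • y, y⟫) t := by
  have hline : HasDerivAt (fun s : ℝ => x + s • y) y t := by
    simpa using ((hasDerivAt_id t).smul_const y).const_add x
  refine ((hasFDerivAt_norm_rpow (x + t • y) hp).comp_hasDerivAt t hline).congr_deriv ?_
  simp only [FunLike.coe_smul, Pi.smul_apply, innerSL_apply_apply, smul_eq_mul]

lemma norm_add_smul_rpow_inner_le {p t : ℝ} (hp : 2 ≤ p) (ht : t ∈ Icc (0 : ℝ) 1) (x y : E) :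
    p * ‖x + t • y‖ ^ (p - 2) * ⟪x + t • y, y⟫ ≤
      p * ‖x‖ ^ (p - 2) * ⟪x, y⟫ + p * (p - 1) * (‖x‖ + ‖y‖) ^ (p - 2) * ‖y‖ ^ 2 * t := by
  have hty : ‖t • y‖ = t * ‖y‖ := by rw [norm_smul, norm_of_nonneg ht.1]
  have hty_le : t * ‖y‖ ≤ ‖y‖ := mul_le_of_le_one_left (norm_nonneg y) ht.2
  have hlip : ‖(‖x + t • y‖ ^ (p - 2)) • (x + t • y) - (‖x‖ ^ (p - 2)) • x‖ ≤
      (p - 1) * (‖x‖ + ‖y‖) ^ (p - 2) * (t * ‖y‖) := by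
    have := norm_rpow_smul_sub_rpow_smul_le_of_norm_le (u := x + t • y) (v := x) (sub_nonneg.2 hp)
      ((norm_add_le x (t • y)).trans (by linarith)) (le_add_of_nonneg_right (norm_nonneg y))
    rwa [add_sub_cancel_left, hty, show p - 2 + 1 = p - 1 by ring] at this
  have hinner := (real_inner_le_norm _ y).trans (mul_le_mul_of_nonneg_right hlip (norm_nonneg y))
  rw [inner_sub_left, real_inner_smul_left, real_inner_smul_left] at hinner
  have := mul_le_mul_of_nonneg_left hinner (by linarith : (0 : ℝ) ≤ p)
  linarith

theorem norm_add_rpow_le {p : ℝ} (hp : 2 ≤ p) (x y : E) :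
    ‖x + y‖ ^ p ≤ ‖x‖ ^ p + p * ‖x‖ ^ (p - 2) * ⟪x, y⟫ +
      p * (p - 1) * 2 ^ (p - 3) * (‖x‖ ^ (p - 2) * ‖y‖ ^ (2 : ℝ) + ‖y‖ ^ p) := by
  have htaylor := le_add_add_half_of_hasDerivAt_le
    (fun t _ => hasDerivAt_norm_add_smul_rpow (by linarith) x y t)
    (fun t ht => norm_add_smul_rpow_inner_le hp ht x y)
  simp only [one_smul, zero_smul, add_zero] at htaylor
  have hrem := mul_le_mul_of_nonneg_left
    (add_rpow_sub_two_mul_sq_le hp (norm_nonneg x) (norm_nonneg y))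
    (by nlinarith : 0 ≤ p * (p - 1))
  rw [rpow_two]
  linarith

end InnerProductSpace

theorem stmt_9_general (d : ℕ) (p : ℝ) (hp : 2 ≤ p)
    (x y : EuclideanSpace ℝ (Fin d)) :
    ‖x + y‖ ^ p ≤
      ‖x‖ ^ p + p * ‖x‖ ^ (p - 2) * ⟪x, y⟫ +
        p * (p - 1) * (2:ℝ) ^ (p - 3) *
          (‖x‖ ^ (p - 2) * ‖y‖ ^ (2:ℝ) + ‖y‖ ^ p) :=
  norm_add_rpow_le hp x y

theorem stmt_9 (d : ℕ) (hd : 1 ≤ d) (p : ℝ) (hp : 2 ≤ p)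
    (x y : EuclideanSpace ℝ (Fin d)) :
    ‖x + y‖ ^ p ≤
      ‖x‖ ^ p + p * ‖x‖ ^ (p - 2) * ⟪x, y⟫ +
        p * (p - 1) * (2:ℝ) ^ (p - 3) *
          (‖x‖ ^ (p - 2) * ‖y‖ ^ (2:ℝ) + ‖y‖ ^ p) :=
  stmt_9_general d p hp x y
end
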